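/- For every n ≥ 3, a sequence of five Cremona moves transforms the tuple E(b_n) := (g_{n+1}; W(g_{n+2}, g_n)) into the tuple E(b_{n−2}) := (g_{n−1}; W(g_n, g_{n−2})). -/

import Mathlib

/-- The odd-indexed Fibonacci numbers: `g n = fib (2n-1)` for `n ≥ 1`, with `g 0 = 1`. -/
def g : ℕ → ℕ
  | 0 => 1
  | (n+1) => Nat.fib (2*n+1)

/-- The label sequence `W(p,q)`, defined by the Euclidean recursion: if `q ∣ p` then `q`
repeated `p/q` times; otherwise `q` repeated `⌊p/q⌋` times followed by `W q (p % q)`. -/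
def W (p q : ℕ) : List ℕ :=
  if hq : q = 0 then []
  else if p % q = 0 then List.replicate (p / q) q
  else List.replicate (p / q) q ++ W q (p % q)
termination_by q
decreasing_by exact Nat.mod_lt _ (Nat.pos_of_ne_zero hq)

/-- A Cremona move on a tuple `(d; m₁, m₂, …)` (entries padded by zeros so that at least three
are present): pass to `(2d − m₁ − m₂ − m₃; d − m₂ − m₃, d − m₁ − m₃, d − m₁ − m₂, m₄, …)`,
then delete zero entries and reorder the entries after the semicolon in nonincreasing order. -/
def cremona : ℤ × List ℤ → ℤ × List ℤ :=
  fun t =>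
    let d := t.1
    let m1 := t.2.getD 0 0
    let m2 := t.2.getD 1 0
    let m3 := t.2.getD 2 0
    let rest := ([d - m2 - m3, d - m1 - m3, d - m1 - m2] ++ t.2.drop 3).filter (· ≠ 0)
    (2*d - m1 - m2 - m3, rest.mergeSort (fun a b => decide (b ≤ a)))

/-!
Put `b = g (n-1)` and `c = g (n-2)`. The recurrence `g (k+2) = 3 g (k+1) - g k` gives
`g n = 3b - c`, `g (n+1) = 8b - 3c` and `g (n+2) = 21b - 8c = 6 (3b - c) + (3b - 2c)`, so two
Euclidean steps give `W (g (n+2)) (g n) = ((3b-c)^6, 3b-2c, T)` and `W (g n) (g (n-2)) = (c, T)`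
with the common tail `T = W (3b-2c) c`, all of whose entries are at most `c`. The five moves
never reach the tail:

    (8b-3c; (3b-c)^6, 3b-2c)
      → (7b-3c; (3b-c)^3, 3b-2c, (2b-c)^3) → (5b-3c; 3b-2c, (2b-c)^3, (b-c)^3)
      → (3b-2c; 2b-c, (b-c)^4) → (2b-c; b, (b-c)^2) → (b; c),

and `2c ≤ b` keeps the tail at the end of every sorted tuple.
-/

open List

theorem W_add_self (p : ℕ) {q : ℕ} (hq : 0 < q) : W (p + q) q = q :: W p q := by
  conv_lhs => rw [W]
  conv_rhs => rw [W]
  rw [dif_neg hq.ne', dif_neg hq.ne', Nat.add_mod_right, Nat.add_div_right p hq]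
  split_ifs <;> simp [replicate_succ]

theorem W_mul_add (k : ℕ) {q r : ℕ} (hr : 0 < r) (hrq : r < q) :
    W (k * q + r) q = replicate k q ++ W q r := by
  induction k with
  | zero =>
    rw [W, dif_neg (by omega), if_neg (by simp [Nat.mod_eq_of_lt hrq]; omega)]
    simp [Nat.mod_eq_of_lt hrq, Nat.div_eq_of_lt hrq]
  | succ k ih =>
    rw [Nat.succ_mul, add_right_comm, W_add_self _ (hr.trans hrq), ih, replicate_succ, cons_append]

theorem W_mul_add_add {r c : ℕ} (k : ℕ) (hc : 0 < c) (hcr : c < r) :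
    W (k * (r + c) + r) (r + c) = replicate k (r + c) ++ r :: W r c := by
  have hstep : W (r + c) r = r :: W r c := by simpa using W_mul_add 1 hc hcr
  rw [W_mul_add k (by omega) (by omega), hstep]

theorem mem_W {p q z : ℕ} (hz : z ∈ W p q) : 0 < z ∧ z ≤ q := by
  induction q using Nat.strong_induction_on generalizing p with
  | _ q ih =>
    rw [W] at hz
    split_ifs at hz with hq
    · simp at hz
    · obtain rfl := eq_of_mem_replicate hz; omega
    · rcases mem_append.1 hz with hz | hz
      · obtain rfl := eq_of_mem_replicate hz; omega
      · have hlt := Nat.mod_lt p (Nat.pos_of_ne_zero hq)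
        have := ih _ hlt hz
        omega

theorem sortedGE_W (p q : ℕ) : (W p q).SortedGE := by
  induction q using Nat.strong_induction_on generalizing p with
  | _ q ih =>
    have hrep : (replicate (p / q) q).Pairwise (· ≥ ·) := pairwise_replicate.2 (Or.inr le_rfl)
    rw [W]
    split_ifs with hq
    · simp [sortedGE_iff_pairwise]
    · exact hrep.sortedGE
    · have hlt := Nat.mod_lt p (Nat.pos_of_ne_zero hq)
      refine (pairwise_append.2 ⟨hrep, (ih _ hlt q).pairwise, ?_⟩).sortedGE
      intro a ha z hz
      rw [eq_of_mem_replicate ha]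
      exact (mem_W hz).2.trans hlt.le

theorem g_add_two_add_g (n : ℕ) : g (n + 2) + g n = 3 * g (n + 1) := by
  cases n with
  | zero => rfl
  | succ n =>
    simp only [g, show 2 * (n + 2) + 1 = 2 * n + 3 + 2 by ring,
      show 2 * (n + 1) + 1 = 2 * n + 1 + 2 by ring, Nat.fib_add_two]
    omega

theorem g_pos (n : ℕ) : 0 < g n := by
  cases n with
  | zero => exact Nat.one_pos
  | succ n => exact Nat.fib_pos.2 (by omega)

theorem two_mul_g_le_g_succ {n : ℕ} (hn : n ≠ 0) : 2 * g n ≤ g (n + 1) := by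
  obtain ⟨n, rfl⟩ := Nat.exists_eq_succ_of_ne_zero hn
  simp only [g, show 2 * (n + 1) + 1 = 2 * n + 1 + 2 by ring, Nat.fib_add_two]
  have := Nat.fib_le_fib_succ (n := 2 * n + 1)
  omega

def sortNonzero (l : List ℤ) : List ℤ :=
  (l.filter (· ≠ 0)).mergeSort (fun a b => decide (b ≤ a))

theorem sortNonzero_eq_of_perm {l r : List ℤ} (h : l ~ r) (hr : r.SortedGE) (hr0 : 0 ∉ r) :
    sortNonzero l = r := by
  have hl : l.filter (· ≠ 0) = l :=
    filter_eq_self.2 fun x hx => by simpa using ne_of_mem_of_not_mem (h.subset hx) hr0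
  rw [sortNonzero, hl]
  exact ((mergeSort_perm _ _).trans h).eq_of_sortedGE sortedGE_mergeSort hr

theorem sortNonzero_eq_append {l T : List ℤ} {c : ℤ} (p : List ℤ) (hc : 0 < c)
    (hT : (c :: T).SortedGE) (hT0 : ∀ z ∈ T, 0 < z) (hl : l ~ p ++ T)
    (hp : (p ++ [c]).SortedGE) : sortNonzero l = p ++ T := by
  have hpcT : (p ++ [c] ++ T).SortedGE :=
    (hp.isChain.append_overlap hT.isChain (cons_ne_nil c [])).sortedGE
  have hpc : ∀ x ∈ p, c ≤ x := fun x hx =>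
    (pairwise_append.1 hp.pairwise).2.2 x hx c (mem_singleton_self c)
  refine sortNonzero_eq_of_perm hl (hpcT.pairwise.sublist ?_).sortedGE fun h0 => ?_
  · exact (sublist_append_left p [c]).append (Sublist.refl T)
  · rcases mem_append.1 h0 with h0 | h0
    · exact absurd (hpc 0 h0) (not_le.2 hc)
    · exact lt_irrefl 0 (hT0 0 h0)

theorem cremona_triple {d a d' e : ℤ} (rest : List ℤ) (hd : 2 * d - 3 * a = d')
    (he : d - 2 * a = e) :
    cremona (d, a :: a :: a :: rest) = (d', sortNonzero (e :: e :: e :: rest)) := by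
  subst hd he
  simp only [cremona, getD_cons_zero, getD_cons_succ, drop_succ_cons, drop_zero, Prod.mk.injEq]
  refine ⟨by ring, ?_⟩
  simp only [show d - a - a = d - 2 * a by ring, cons_append, nil_append]
  rfl

theorem cremona_of_add_eq {d m e : ℤ} (rest : List ℤ) (hd : m + e = d) :
    cremona (d, m :: e :: e :: rest) = (m, sortNonzero ((m - e) :: rest)) := by
  subst hd
  simp only [cremona, getD_cons_zero, getD_cons_succ, drop_succ_cons, drop_zero, Prod.mk.injEq]
  refine ⟨by ring, ?_⟩
  simp only [show m + e - e - e = m - e by ring, show m + e - m - e = 0 by ring, cons_append,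
    nil_append, sortNonzero, filter_cons, ne_eq, not_true_eq_false, decide_false]
  rfl

theorem cremona_iterate_five {b c : ℤ} {T : List ℤ} (hc : 0 < c) (hbc : 2 * c ≤ b)
    (hT : (c :: T).SortedGE) (hT0 : ∀ z ∈ T, 0 < z) :
    cremona^[5] (8 * b - 3 * c, replicate 6 (3 * b - c) ++ (3 * b - 2 * c) :: T)
      = (b, c :: T) := by
  have hsort (p : List ℤ) {l : List ℤ} (hl : l ~ p ++ T) (hp : (p ++ [c]).SortedGE) :
      sortNonzero l = p ++ T :=
    sortNonzero_eq_append p hc hT hT0 hl hp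
  have h₁ : cremona (8*b - 3*c, replicate 6 (3*b-c) ++ (3*b-2*c) :: T)
      = (7*b - 3*c, (3*b-c) :: (3*b-c) :: (3*b-c) :: (3*b-2*c) :: (2*b-c) :: (2*b-c) :: (2*b-c)
          :: T) := by
    simp only [replicate_succ, replicate_zero, cons_append, nil_append]
    rw [cremona_triple (d' := 7*b - 3*c) (e := 2*b - c) _ (by ring) (by ring)]
    exact congrArg (Prod.mk _) <| hsort [3*b-c, 3*b-c, 3*b-c, 3*b-2*c, 2*b-c, 2*b-c, 2*b-c]
      ((perm_append_comm (l₁ := [2*b-c, 2*b-c, 2*b-c])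
        (l₂ := [3*b-c, 3*b-c, 3*b-c, 3*b-2*c])).append_right T)
      (by simp [sortedGE_iff_isChain]; omega)
  have h₂ : cremona (7*b - 3*c, (3*b-c) :: (3*b-c) :: (3*b-c) :: (3*b-2*c) :: (2*b-c) :: (2*b-c)
        :: (2*b-c) :: T)
      = (5*b - 3*c, (3*b-2*c) :: (2*b-c) :: (2*b-c) :: (2*b-c) :: (b-c) :: (b-c) :: (b-c)
          :: T) := by
    rw [cremona_triple (d' := 5*b - 3*c) (e := b - c) _ (by ring) (by ring)]
    exact congrArg (Prod.mk _) <| hsort [3*b-2*c, 2*b-c, 2*b-c, 2*b-c, b-c, b-c, b-c]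
      ((perm_append_comm (l₁ := [b-c, b-c, b-c])
        (l₂ := [3*b-2*c, 2*b-c, 2*b-c, 2*b-c])).append_right T)
      (by simp [sortedGE_iff_isChain]; omega)
  have h₃ : cremona (5*b - 3*c, (3*b-2*c) :: (2*b-c) :: (2*b-c) :: (2*b-c) :: (b-c) :: (b-c)
        :: (b-c) :: T)
      = (3*b - 2*c, (2*b-c) :: (b-c) :: (b-c) :: (b-c) :: (b-c) :: T) := by
    rw [cremona_of_add_eq _ (by ring), show 3*b - 2*c - (2*b - c) = b - c by ring]
    exact congrArg (Prod.mk _) <| hsort [2*b-c, b-c, b-c, b-c, b-c] (Perm.swap _ _ _)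
      (by simp [sortedGE_iff_isChain]; omega)
  have h₄ : cremona (3*b - 2*c, (2*b-c) :: (b-c) :: (b-c) :: (b-c) :: (b-c) :: T)
      = (2*b - c, b :: (b-c) :: (b-c) :: T) := by
    rw [cremona_of_add_eq _ (by ring), show 2*b - c - (b - c) = b by ring]
    exact congrArg (Prod.mk _) <| hsort [b, b-c, b-c] (Perm.refl _)
      (by simp [sortedGE_iff_isChain]; omega)
  have h₅ : cremona (2*b - c, b :: (b-c) :: (b-c) :: T) = (b, c :: T) := by
    rw [cremona_of_add_eq _ (by ring), show b - (b - c) = c by ring]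
    exact congrArg (Prod.mk _) <| hsort [c] (Perm.refl _) (by simp [sortedGE_iff_isChain])
  change cremona (cremona (cremona (cremona (cremona _)))) = _
  rw [h₁, h₂, h₃, h₄, h₅]

-- In `l.map (fun m => (m : ℤ))` the binder `m` is elaborated at type `ℤ`, so `l : List ℕ` is
-- first coerced through the list monad and then mapped by the identity.
theorem map_coe_eq_map_natCast (l : List ℕ) : l.map (fun m => (m : ℤ)) = l.map Nat.cast :=
  (map_id _).trans (bind_pure_comp _ _)

/-- for `n ≥ 3`, five Cremona moves transform
`E(b_n) = (g_{n+1}; W(g_{n+2}, g_n))` into `E(b_{n−2}) = (g_{n−1}; W(g_n, g_{n−2}))`. -/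
theorem Ebn_five_cremona_moves (n : ℕ) (hn : 3 ≤ n) :
    cremona^[5] ((g (n+1) : ℤ), (W (g (n+2)) (g n)).map (fun m => (m : ℤ)))
      = ((g (n-1) : ℤ), (W (g n) (g (n-2))).map (fun m => (m : ℤ))) := by
  obtain ⟨k, rfl⟩ : ∃ k, n = k + 3 := ⟨n - 3, by omega⟩
  simp only [show k + 3 + 1 = k + 4 from rfl, show k + 3 + 2 = k + 5 from rfl,
    show k + 3 - 1 = k + 2 from rfl, show k + 3 - 2 = k + 1 from rfl, map_coe_eq_map_natCast]
  have h₃ : g (k + 3) + g (k + 1) = 3 * g (k + 2) := g_add_two_add_g (k + 1)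
  have h₄ : g (k + 4) + g (k + 2) = 3 * g (k + 3) := g_add_two_add_g (k + 2)
  have h₅ : g (k + 5) + g (k + 3) = 3 * g (k + 4) := g_add_two_add_g (k + 3)
  have hc : 0 < g (k + 1) := g_pos (k + 1)
  have hbc : 2 * g (k + 1) ≤ g (k + 2) := two_mul_g_le_g_succ k.succ_ne_zero
  obtain ⟨r, hr⟩ : ∃ r, g (k + 3) = r + g (k + 1) := ⟨g (k + 3) - g (k + 1), by omega⟩
  rw [show g (k + 5) = 6 * g (k + 3) + r by omega, hr, W_mul_add_add 6 hc (by omega),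
    W_add_self r hc, map_append, map_replicate, map_cons, map_cons,
    show ((g (k + 4) : ℕ) : ℤ) = 8 * g (k + 2) - 3 * g (k + 1) by omega,
    show ((r + g (k + 1) : ℕ) : ℤ) = 3 * g (k + 2) - g (k + 1) by omega,
    show (r : ℤ) = 3 * g (k + 2) - 2 * g (k + 1) by omega]
  have hT : (g (k + 1) :: W r (g (k + 1))).SortedGE := W_add_self r hc ▸ sortedGE_W _ _
  exact cremona_iterate_five (by omega) (by omega) (Nat.strictMono_cast.sortedGE_listMap.2 hT)
    (forall_mem_map.2 fun z hz => by exact_mod_cast (mem_W hz).1)
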